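/- With the Lamport superposition-oracle hash unitary U_h (the case w = 2 of the hash-chain oracle unitary, acting on query registers X, Y and secret-key registers S_i^j for i = 1,…,l, j = 0,1), for every secret-key register S_i^j the commutator with the uniform-superposition projector satisfies ‖[U_h, Φ_{S_i^j}]‖ ≤ 6·2^{−n/2}. -/

import Mathlib

open scoped Matrix

set_option synthInstance.maxSize 1024
set_option synthInstance.maxHeartbeats 1000000
set_option maxHeartbeats 1000000

namespace Stmt10

/-- Basis labels for an `n`-qubit register. -/
abbrev Bn (n : ℕ) := Fin n → Bool

/-- Basis labels for the full Lamport system: query registers `X`, `Y`, the secret-key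
registers `S_i^j` and the public-key registers `P_i^j` (`i ∈ {1,…,l}`, `j ∈ {0,1}`). -/
abbrev Idx (n l : ℕ) := Bn n × Bn n × ((Fin l × Bool) → Bn n) × ((Fin l × Bool) → Bn n)

/-- The equality projector `P⁼_{XS_i^j}` comparing `X` with the secret-key register
`S_i^j` (identity elsewhere). -/
noncomputable def Peq (n l : ℕ) (i : Fin l) (j : Bool) :
    Matrix (Idx n l) (Idx n l) ℂ :=
  fun p q => if p.1 = p.2.2.1 (i, j) ∧ q = p then 1 else 0

/-- The transversal CNOT `CNOT^{⊗n}_{P_i^j : Y}` XOR-ing the public-key register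
`P_i^j` into the output register `Y`. -/
noncomputable def Cnot (n l : ℕ) (i : Fin l) (j : Bool) :
    Matrix (Idx n l) (Idx n l) ℂ :=
  fun p q =>
    if q.1 = p.1 ∧ q.2.2 = p.2.2 ∧
        q.2.1 = (fun t => xor (p.2.1 t) (p.2.2.2 (i, j) t))
      then 1 else 0

/-- `U_{i,j} = P⁼_{XS_i^j} ⊗ (CNOT^{⊗n}_{P_i^j:Y} − 1) + 1`. -/
noncomputable def Uij (n l : ℕ) (i : Fin l) (j : Bool) :
    Matrix (Idx n l) (Idx n l) ℂ :=
  Peq n l i j * (Cnot n l i j - 1) + 1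

/-- `P^≠_{XS} = ∏_{i,j} (1 − P⁼_{XS_i^j})`: the (diagonal) projector onto basis states
where `X` differs from all secret-key registers. -/
noncomputable def Pneq (n l : ℕ) : Matrix (Idx n l) (Idx n l) ℂ :=
  fun p q => if (∀ (i : Fin l) (j : Bool), p.1 ≠ p.2.2.1 (i, j)) ∧ q = p then 1 else 0

/-- The extension to the full system of a unitary `U′` acting only on `XY`. -/
noncomputable def Uext (n l : ℕ) (U0 : Matrix (Bn n × Bn n) (Bn n × Bn n) ℂ) :
    Matrix (Idx n l) (Idx n l) ℂ :=
  fun p q => if q.2.2 = p.2.2 then U0 (p.1, p.2.1) (q.1, q.2.1) else 0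

/-- `U^≠ = P^≠_{XS}(U′_{XY} − 1) + 1`. -/
noncomputable def Uneq (n l : ℕ) (U0 : Matrix (Bn n × Bn n) (Bn n × Bn n) ℂ) :
    Matrix (Idx n l) (Idx n l) ℂ :=
  Pneq n l * (Uext n l U0 - 1) + 1

/-- The Lamport superposition-oracle hash unitary `U_h = (∏_{i,j} U_{i,j})·U^≠`. -/
noncomputable def Uh (n l : ℕ) (U0 : Matrix (Bn n × Bn n) (Bn n × Bn n) ℂ) :
    Matrix (Idx n l) (Idx n l) ℂ :=
  (List.ofFn fun i : Fin l => Uij n l i false * Uij n l i true).prod * Uneq n l U0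

/-- The uniform-superposition projector `Φ_{S_i^j}` on the secret-key register `S_i^j`
(identity elsewhere); the rank-one factor `|Φ⟩⟨Φ|` has all entries `2^{−n}`. -/
noncomputable def PhiS (n l : ℕ) (i : Fin l) (j : Bool) :
    Matrix (Idx n l) (Idx n l) ℂ :=
  fun p q =>
    if p.1 = q.1 ∧ p.2.1 = q.2.1 ∧ p.2.2.2 = q.2.2.2 ∧
        (∀ k : Fin l × Bool, k ≠ (i, j) → p.2.2.1 k = q.2.2.1 k)
      then ((2 : ℂ) ^ n)⁻¹ else 0

end Stmt10

/-!
Write `U_{i,j} = P⁼(C - 1) + 1` and `U^≠ = P^≠(U' - 1) + 1`. The permutation matrix `C` and the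
unitary `U'` commute with `Φ = Φ_{S_i^j}`, so `[p(c - 1) + 1, Φ] = [p, Φ](c - 1)`. Among the
diagonal projectors only those involving `S_i^j` fail to commute with `Φ`: `P⁼_{XS_i^j}` itself and
`P^≠ = Q(1 - P⁼_{XS_i^j})`, where `Q` commutes with `Φ`. For projections `P` and `Φ`,
`‖[P, Φ]‖ ≤ ‖PΦ‖` because `[P, Φ]` exchanges `ran P` and `ker P`, and `‖PΦ‖² = ‖ΦPΦ‖ ≤ 2^{-n}`
since `ΦP⁼_{XS_i^j}Φ = 2^{-n}Φ`. Hence `‖[U_{i,j}, Φ]‖, ‖[U^≠, Φ]‖ ≤ 2·2^{-n/2}`, while every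
other `U_{a,b}` commutes with `Φ`; the Leibniz rule with `‖∏ U_{a,b}‖ = 1` and `‖U^≠‖ ≤ 2` gives
the bound `(2 + 2·2)·2^{-n/2}`.
-/

section Commutator

variable {R : Type*} [Ring R]

lemma commutator_mul_eq (a b φ : R) :
    a * b * φ - φ * (a * b) = a * (b * φ - φ * b) + (a * φ - φ * a) * b := by
  noncomm_ring

lemma commutator_mul_sub_one_add_one {p c φ : R} (hc : Commute c φ) :
    (p * (c - 1) + 1) * φ - φ * (p * (c - 1) + 1) = (p * φ - φ * p) * (c - 1) := by
  have hc' : (c - 1) * φ = φ * (c - 1) := (hc.sub_left (Commute.one_left φ)).eq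
  calc _ = p * ((c - 1) * φ) - φ * p * (c - 1) := by noncomm_ring
    _ = _ := by rw [hc']; noncomm_ring

lemma star_mul_self_mul_sub_one_add_one [StarRing R] {p c : R} (hp : IsStarProjection p)
    (hpc : Commute p c) (hc : star c * c = 1) :
    star (p * (c - 1) + 1) * (p * (c - 1) + 1) = 1 := by
  have hpc' : Commute p (star c - 1) := by
    simpa [hp.isSelfAdjoint.star_eq] using (hpc.sub_right (Commute.one_right p)).star_star
  calc star (p * (c - 1) + 1) * (p * (c - 1) + 1)
      = (p * (star c - 1) + 1) * (p * (c - 1) + 1) := by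
        rw [star_add, star_mul, hp.isSelfAdjoint.star_eq, star_sub, star_one, hpc'.eq]
    _ = p * ((star c - 1) * p) * (c - 1) + p * ((star c - 1) + (c - 1)) + 1 := by noncomm_ring
    _ = p * p * ((star c - 1) * (c - 1)) + p * ((star c - 1) + (c - 1)) + 1 := by
        rw [← hpc'.eq]; noncomm_ring
    _ = p * (star c * c - 1) + 1 := by rw [hp.isIdempotentElem.eq]; noncomm_ring
    _ = 1 := by rw [hc, sub_self, mul_zero, zero_add]

end Commutator

section NormedCommutator

variable {R : Type*} [NormedRing R]

lemma norm_commutator_mul_le (a b φ : R) :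
    ‖a * b * φ - φ * (a * b)‖ ≤ ‖a‖ * ‖b * φ - φ * b‖ + ‖a * φ - φ * a‖ * ‖b‖ := by
  rw [commutator_mul_eq]
  exact (norm_add_le _ _).trans (add_le_add (norm_mul_le _ _) (norm_mul_le _ _))

lemma norm_commutator_mul_le_of_norm_le_one {a b : R} (ha : ‖a‖ ≤ 1) (hb : ‖b‖ ≤ 1) (φ : R) :
    ‖a * b * φ - φ * (a * b)‖ ≤ ‖a * φ - φ * a‖ + ‖b * φ - φ * b‖ := calc
  _ ≤ ‖a‖ * ‖b * φ - φ * b‖ + ‖a * φ - φ * a‖ * ‖b‖ := norm_commutator_mul_le a b φ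
  _ ≤ 1 * ‖b * φ - φ * b‖ + ‖a * φ - φ * a‖ * 1 := by gcongr
  _ = _ := by ring

variable [NormOneClass R]

lemma norm_commutator_list_prod_le (φ : R) (L : List R) (hL : ∀ x ∈ L, ‖x‖ ≤ 1) :
    ‖L.prod * φ - φ * L.prod‖ ≤ (L.map fun x => ‖x * φ - φ * x‖).sum := by
  induction L with
  | nil => simp
  | cons x L ih =>
    rw [List.forall_mem_cons] at hL
    have hprod : ‖L.prod‖ ≤ 1 :=
      mem_closedBall_zero_iff.mp <| (Submonoid.unitClosedBall R).list_prod_mem fun x hx =>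
        mem_closedBall_zero_iff.mpr (hL.2 x hx)
    rw [List.prod_cons, List.map_cons, List.sum_cons]
    exact (norm_commutator_mul_le_of_norm_le_one hL.1 hprod φ).trans (by gcongr; exact ih hL.2)

lemma norm_commutator_mul_sub_one_add_one_le {p c φ : R} (hc : Commute c φ) (hc₁ : ‖c‖ ≤ 1) :
    ‖(p * (c - 1) + 1) * φ - φ * (p * (c - 1) + 1)‖ ≤ 2 * ‖p * φ - φ * p‖ := by
  rw [commutator_mul_sub_one_add_one hc, mul_comm]
  refine (norm_mul_le _ _).trans (by gcongr; exact (norm_sub_le _ _).trans (by simp; linarith))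

end NormedCommutator

section Hilbert

variable {𝕜 E : Type*} [RCLike 𝕜] [NormedAddCommGroup E] [InnerProductSpace 𝕜 E]
  [CompleteSpace E]

lemma IsStarProjection.apply_apply {p : E →L[𝕜] E} (hp : IsStarProjection p) (v : E) :
    p (p v) = p v :=
  congrArg (· v) hp.isIdempotentElem.eq

lemma IsStarProjection.norm_add_one_sub_sq {p : E →L[𝕜] E} (hp : IsStarProjection p) (u w : E) :
    ‖p u + (1 - p) w‖ ^ 2 = ‖p u‖ ^ 2 + ‖(1 - p) w‖ ^ 2 := by
  rw [sq, sq, sq]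
  refine norm_add_sq_eq_norm_sq_add_norm_sq_of_inner_eq_zero (𝕜 := 𝕜) _ _ ?_
  refine (hp.isSelfAdjoint.isSymmetric u _).trans ?_
  simp [hp.apply_apply]

lemma IsStarProjection.norm_sq_eq {p : E →L[𝕜] E} (hp : IsStarProjection p) (v : E) :
    ‖v‖ ^ 2 = ‖p v‖ ^ 2 + ‖(1 - p) v‖ ^ 2 := by
  rw [← hp.norm_add_one_sub_sq]; simp

theorem norm_commutator_le_of_isStarProjection {p : E →L[𝕜] E} (hp : IsStarProjection p)
    (φ : E →L[𝕜] E) : ‖p * φ - φ * p‖ ≤ max ‖p * φ‖ ‖φ * p‖ := by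
  set M := max ‖p * φ‖ ‖φ * p‖
  have hM : 0 ≤ M := (norm_nonneg _).trans (le_max_left _ _)
  refine ContinuousLinearMap.opNorm_le_bound _ hM fun v => ?_
  have hsplit : (p * φ - φ * p) v = p (φ ((1 - p) v)) + (1 - p) (-φ (p v)) := by
    simp only [sub_apply, mul_apply_eq_comp, one_apply_eq_self, map_sub, map_neg]
    abel
  have h₁ : ‖p (φ ((1 - p) v))‖ ≤ M * ‖(1 - p) v‖ :=
    ((p * φ).le_opNorm _).trans (by gcongr; exact le_max_left _ _)
  have h₂ : ‖(1 - p) (-φ (p v))‖ ≤ M * ‖p v‖ := calc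
    _ ≤ ‖-φ (p v)‖ := by
      rw [← sq_le_sq₀ (norm_nonneg _) (norm_nonneg _), hp.norm_sq_eq (-φ (p v))]
      exact le_add_of_nonneg_left (sq_nonneg _)
    _ = ‖(φ * p) (p v)‖ := by simp [hp.apply_apply]
    _ ≤ M * ‖p v‖ := ((φ * p).le_opNorm _).trans (by gcongr; exact le_max_right _ _)
  rw [hsplit, ← sq_le_sq₀ (norm_nonneg _) (by positivity), hp.norm_add_one_sub_sq, mul_pow,
    hp.norm_sq_eq v]
  nlinarith [pow_le_pow_left₀ (norm_nonneg _) h₁ 2, pow_le_pow_left₀ (norm_nonneg _) h₂ 2]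

end Hilbert

section CStarRing

variable {A : Type*} [NormedRing A] [StarRing A] [CStarRing A]

lemma IsStarProjection.norm_mul_sq {p : A} (hp : IsStarProjection p) (a : A) :
    ‖p * a‖ ^ 2 = ‖star a * p * a‖ := by
  rw [sq, ← CStarRing.norm_star_mul_self, star_mul, hp.isSelfAdjoint.star_eq, mul_assoc,
    ← mul_assoc p, hp.isIdempotentElem.eq, mul_assoc]

lemma norm_mul_sub_one_add_one_le [NormOneClass A] {p u : A} (hp : IsStarProjection p)
    (hu : ‖u‖ ≤ 1) : ‖p * (u - 1) + 1‖ ≤ 2 := calc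
  _ = ‖p * u + (1 - p)‖ := by congr 1; noncomm_ring
  _ ≤ ‖p‖ * ‖u‖ + ‖1 - p‖ := (norm_add_le _ _).trans (by gcongr; exact norm_mul_le _ _)
  _ ≤ 1 * 1 + 1 := by
    gcongr
    exacts [hp.norm_le, hp.one_sub.norm_le]
  _ = 2 := by norm_num

end CStarRing

namespace Matrix

variable {ι R : Type*} [Fintype ι] [DecidableEq ι]

open scoped Matrix.Norms.L2Operator in
theorem norm_commutator_le_norm_mul_of_isStarProjection {𝕜 : Type*} [RCLike 𝕜] {P Φ : Matrix ι ι 𝕜}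
    (hP : IsStarProjection P) (hΦ : IsSelfAdjoint Φ) : ‖P * Φ - Φ * P‖ ≤ ‖P * Φ‖ := by
  have hΦP : ‖Φ * P‖ = ‖P * Φ‖ := by
    rw [← norm_star, star_mul, hΦ.star_eq, hP.isSelfAdjoint.star_eq]
  rw [cstar_norm_def, map_sub, map_mul, map_mul]
  refine (norm_commutator_le_of_isStarProjection
    (hP.map (toEuclideanCLM (n := ι) (𝕜 := 𝕜))) _).trans_eq ?_
  rw [← map_mul, ← map_mul, ← cstar_norm_def, ← cstar_norm_def, hΦP, max_self]

lemma isStarProjection_diagonal_ite [Semiring R] [StarRing R] (s : ι → Prop) [DecidablePred s] :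
    IsStarProjection (diagonal fun p => if s p then (1 : R) else 0) where
  isIdempotentElem := by
    rw [IsIdempotentElem, diagonal_mul_diagonal]
    congr 1; funext p; split_ifs <;> simp
  isSelfAdjoint := by
    rw [IsSelfAdjoint, star_eq_conjTranspose, diagonal_conjTranspose]
    congr 1; funext p; rw [Pi.star_apply]; split_ifs <;> simp

lemma commute_diagonal_of_apply_ne_zero [CommSemiring R] {d : ι → R} {M : Matrix ι ι R}
    (h : ∀ p q, M p q ≠ 0 → d p = d q) : Commute (diagonal d) M := by
  ext p q
  rw [diagonal_mul, mul_diagonal]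
  by_cases hM : M p q = 0
  · simp [hM]
  · rw [h p q hM, mul_comm]

lemma commute_permMatrix [NonAssocSemiring R] (σ : Equiv.Perm ι) {M : Matrix ι ι R}
    (h : ∀ p q, M (σ p) (σ q) = M p q) : Commute (σ.permMatrix R) M := by
  rw [Commute, SemiconjBy, PEquiv.toMatrix_toPEquiv_mul, PEquiv.mul_toMatrix_toPEquiv]
  ext p q
  simpa using h p (σ.symm q)

lemma star_permMatrix_mul_self [NonAssocSemiring R] [StarRing R] (σ : Equiv.Perm ι) :
    star (σ.permMatrix R) * σ.permMatrix R = 1 := by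
  rw [star_eq_conjTranspose, conjTranspose_permMatrix, ← permMatrix_mul, mul_inv_cancel,
    permMatrix_one]

end Matrix

namespace Stmt10

open Matrix
open scoped Kronecker Matrix.Norms.L2Operator

variable {n l : ℕ}

def updateKey (i : Fin l) (j : Bool) (p : Idx n l) (s : Bn n) : Idx n l :=
  (p.1, p.2.1, Function.update p.2.2.1 (i, j) s, p.2.2.2)

def xorKey (a : Fin l) (b : Bool) : Equiv.Perm (Idx n l) :=
  Function.Involutive.toPerm (fun p => (p.1, fun t => xor (p.2.1 t) (p.2.2.2 (a, b) t), p.2.2))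
    fun p => by simp

@[simp]
lemma xorKey_apply (a : Fin l) (b : Bool) (p : Idx n l) :
    xorKey a b p = (p.1, fun t => xor (p.2.1 t) (p.2.2.2 (a, b) t), p.2.2) := rfl

lemma Cnot_eq_permMatrix (a : Fin l) (b : Bool) : Cnot n l a b = (xorKey a b).permMatrix ℂ := by
  ext p q
  simp only [Cnot, PEquiv.toMatrix_apply, Equiv.toPEquiv_apply, Option.mem_def,
    Option.some.injEq, xorKey_apply, Prod.ext_iff]
  simp only [eq_comm (a := q.1), eq_comm (a := q.2.1), eq_comm (a := q.2.2.1),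
    eq_comm (a := q.2.2.2)]
  exact if_congr (by tauto) rfl rfl

lemma Uext_eq_kronecker (U0 : Matrix (Bn n × Bn n) (Bn n × Bn n) ℂ) :
    Uext n l U0 = (U0 ⊗ₖ (1 : Matrix _ _ ℂ)).submatrix (Equiv.prodAssoc _ _ _).symm
      (Equiv.prodAssoc _ _ _).symm := by
  ext p q
  simp [Uext, one_apply, eq_comm]

lemma Uext_mem_unitary {U0 : Matrix (Bn n × Bn n) (Bn n × Bn n) ℂ} (hU0 : U0ᴴ * U0 = 1) :
    Uext n l U0 ∈ unitary (Matrix (Idx n l) (Idx n l) ℂ) := by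
  have hK := kronecker_mem_unitary (mem_unitaryGroup_iff'.mpr hU0)
    (one_mem (unitary (Matrix ((Fin l × Bool → Bn n) × (Fin l × Bool → Bn n)) _ ℂ)))
  rw [Uext_eq_kronecker, mem_unitaryGroup_iff', star_eq_conjTranspose, conjTranspose_submatrix,
    submatrix_mul_equiv, ← star_eq_conjTranspose, hK.1, submatrix_one_equiv]

section Projections

variable (i : Fin l) (j : Bool)

lemma Peq_eq_diagonal :
    Peq n l i j = diagonal fun p => if p.1 = p.2.2.1 (i, j) then 1 else 0 := by
  ext p q
  by_cases h : p = q
  · subst h; simp [Peq]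
  · simp [Peq, h, Ne.symm h]

lemma Pneq_eq_diagonal : Pneq n l =
    diagonal fun p => if ∀ (a : Fin l) (b : Bool), p.1 ≠ p.2.2.1 (a, b) then 1 else 0 := by
  ext p q
  by_cases h : p = q
  · subst h; simp [Pneq]
  · simp [Pneq, h, Ne.symm h]

-- `∏_{(a,b) ≠ (i,j)} (1 - P⁼_{XS_a^b})`, the part of `P^≠` that commutes with `Φ_{S_i^j}`
def PneqExcept : Matrix (Idx n l) (Idx n l) ℂ :=
  diagonal fun p => if ∀ k, k ≠ (i, j) → p.1 ≠ p.2.2.1 k then 1 else 0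

lemma Pneq_eq_PneqExcept_mul : Pneq n l = PneqExcept i j * (1 - Peq n l i j) := by
  rw [Pneq_eq_diagonal, PneqExcept, Peq_eq_diagonal, ← diagonal_one, diagonal_sub,
    diagonal_mul_diagonal]
  congr 1
  funext p
  by_cases hij : p.1 = p.2.2.1 (i, j)
  · rw [if_neg fun h => h i j hij]
    simp [hij]
  · simp only [hij, if_false, sub_zero, mul_one]
    refine if_congr ⟨fun h k _ => h k.1 k.2, fun h a b => ?_⟩ rfl rfl
    by_cases hab : (a, b) = (i, j)
    · rwa [hab]
    · exact h _ hab

lemma isStarProjection_Peq : IsStarProjection (Peq n l i j) := by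
  rw [Peq_eq_diagonal]; exact isStarProjection_diagonal_ite _

lemma isStarProjection_Pneq : IsStarProjection (Pneq n l) := by
  rw [Pneq_eq_diagonal]; exact isStarProjection_diagonal_ite _

lemma isStarProjection_PneqExcept : IsStarProjection (PneqExcept (n := n) i j) :=
  isStarProjection_diagonal_ite _

end Projections

lemma commute_Peq_Cnot (a : Fin l) (b : Bool) : Commute (Peq n l a b) (Cnot n l a b) := by
  rw [Cnot_eq_permMatrix, Peq_eq_diagonal]
  refine (commute_permMatrix _ fun p q => ?_).symm
  simp only [diagonal_apply, (xorKey a b).injective.eq_iff]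
  rfl

lemma Uij_mem_unitary (a : Fin l) (b : Bool) :
    Uij n l a b ∈ unitary (Matrix (Idx n l) (Idx n l) ℂ) :=
  mem_unitaryGroup_iff'.mpr <| star_mul_self_mul_sub_one_add_one (isStarProjection_Peq a b)
    (commute_Peq_Cnot a b) (by rw [Cnot_eq_permMatrix]; exact star_permMatrix_mul_self _)

noncomputable def Uprod (n l : ℕ) : Matrix (Idx n l) (Idx n l) ℂ :=
  (List.ofFn fun i : Fin l => Uij n l i false * Uij n l i true).prod

lemma Uh_eq_Uprod_mul (U0 : Matrix (Bn n × Bn n) (Bn n × Bn n) ℂ) :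
    Uh n l U0 = Uprod n l * Uneq n l U0 := rfl

lemma Uprod_mem_unitary : Uprod n l ∈ unitary (Matrix (Idx n l) (Idx n l) ℂ) :=
  Submonoid.list_prod_mem _ <| by
    simp only [List.mem_ofFn]
    rintro _ ⟨a, rfl⟩
    exact mul_mem (Uij_mem_unitary a false) (Uij_mem_unitary a true)

lemma norm_Uneq_le {U0 : Matrix (Bn n × Bn n) (Bn n × Bn n) ℂ} (hU0 : U0ᴴ * U0 = 1) :
    ‖Uneq n l U0‖ ≤ 2 :=
  norm_mul_sub_one_add_one_le isStarProjection_Pneq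
    (CStarRing.norm_of_mem_unitary (Uext_mem_unitary hU0)).le

section PhiS

variable (i : Fin l) (j : Bool)

@[simp]
lemma updateKey_key (p : Idx n l) (s : Bn n) : (updateKey i j p s).2.2.1 (i, j) = s := by
  simp [updateKey]

@[simp]
lemma updateKey_fst (p : Idx n l) (s : Bn n) : (updateKey i j p s).1 = p.1 := rfl

@[simp]
lemma updateKey_updateKey (p : Idx n l) (s t : Bn n) :
    updateKey i j (updateKey i j p s) t = updateKey i j p t := by
  simp [updateKey]

lemma updateKey_injective (p : Idx n l) : Function.Injective (updateKey i j p) := fun s t h => by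
  simpa using congrArg (fun r : Idx n l => r.2.2.1 (i, j)) h

lemma PhiS_apply (p q : Idx n l) :
    PhiS n l i j p q =
      if updateKey i j p (q.2.2.1 (i, j)) = q then ((2 : ℂ) ^ n)⁻¹ else 0 := by
  refine if_congr ?_ rfl rfl
  simp only [updateKey, Prod.ext_iff, Function.update_eq_iff, true_and]
  tauto

lemma PhiS_apply_comm (p q : Idx n l) : PhiS n l i j p q = PhiS n l i j q p := by
  refine if_congr ?_ rfl rfl
  simp only [eq_comm (a := p.1), eq_comm (a := p.2.1), eq_comm (a := p.2.2.2),
    eq_comm (a := p.2.2.1 _)]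

@[simp]
lemma PhiS_updateKey_left (p q : Idx n l) (s : Bn n) :
    PhiS n l i j (updateKey i j p s) q = PhiS n l i j p q := by
  simp [PhiS_apply]

lemma sum_PhiS_mul (p : Idx n l) (g : Idx n l → ℂ) :
    ∑ r, PhiS n l i j p r * g r = ((2 : ℂ) ^ n)⁻¹ * ∑ s, g (updateKey i j p s) := by
  rw [Finset.mul_sum]
  refine (Fintype.sum_of_injective _ (updateKey_injective i j p) _ _ (fun r hr => ?_)
    (fun s => ?_)).symm
  · rw [PhiS_apply, if_neg fun h => hr ⟨_, h⟩, zero_mul]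
  · rw [PhiS_apply, updateKey_key, if_pos rfl]

lemma PhiS_mul_apply (M : Matrix (Idx n l) (Idx n l) ℂ) (p q : Idx n l) :
    (PhiS n l i j * M) p q = ((2 : ℂ) ^ n)⁻¹ * ∑ s, M (updateKey i j p s) q := by
  rw [mul_apply, sum_PhiS_mul]

lemma mul_PhiS_apply (M : Matrix (Idx n l) (Idx n l) ℂ) (p q : Idx n l) :
    (M * PhiS n l i j) p q = ((2 : ℂ) ^ n)⁻¹ * ∑ s, M p (updateKey i j q s) := by
  simp_rw [mul_apply, PhiS_apply_comm i j _ q, mul_comm (M p _), sum_PhiS_mul]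

lemma isStarProjection_PhiS : IsStarProjection (PhiS n l i j) where
  isIdempotentElem := by
    ext p q
    simp [PhiS_mul_apply]
  isSelfAdjoint := by
    ext p q
    rw [star_apply, PhiS_apply_comm]
    simp only [PhiS]
    split_ifs <;> simp

lemma PhiS_mul_Peq_mul_PhiS :
    PhiS n l i j * Peq n l i j * PhiS n l i j = ((2 : ℂ) ^ n)⁻¹ • PhiS n l i j := by
  ext p q
  rw [mul_assoc, PhiS_mul_apply, Peq_eq_diagonal]
  simp [diagonal_mul]

lemma commute_diagonal_PhiS {d : Idx n l → ℂ} (hd : ∀ p s, d (updateKey i j p s) = d p) :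
    Commute (diagonal d) (PhiS n l i j) :=
  commute_diagonal_of_apply_ne_zero fun p q h => by
    rw [PhiS_apply] at h
    split_ifs at h with hq
    · rw [← hq, hd]
    · exact absurd rfl h

lemma commute_Peq_PhiS {a : Fin l} {b : Bool} (hab : (a, b) ≠ (i, j)) :
    Commute (Peq n l a b) (PhiS n l i j) := by
  rw [Peq_eq_diagonal]
  exact commute_diagonal_PhiS i j fun p s => by simp [updateKey, Function.update_of_ne hab]

lemma commute_PneqExcept_PhiS : Commute (PneqExcept (n := n) i j) (PhiS n l i j) :=
  commute_diagonal_PhiS i j fun p s => by simp +contextual [updateKey]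

lemma commute_Cnot_PhiS (a : Fin l) (b : Bool) : Commute (Cnot n l a b) (PhiS n l i j) := by
  rw [Cnot_eq_permMatrix]
  refine commute_permMatrix _ fun p q => ?_
  rw [PhiS_apply, PhiS_apply]
  exact if_congr ((xorKey a b).injective.eq_iff (a := updateKey i j p _)) rfl rfl

lemma commute_Uij_PhiS {a : Fin l} {b : Bool} (hab : (a, b) ≠ (i, j)) :
    Commute (Uij n l a b) (PhiS n l i j) :=
  ((commute_Peq_PhiS i j hab).mul_left
    ((commute_Cnot_PhiS i j a b).sub_left (Commute.one_left _))).add_left (Commute.one_left _)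

lemma commute_Uext_PhiS (U0 : Matrix (Bn n × Bn n) (Bn n × Bn n) ℂ) :
    Commute (Uext n l U0) (PhiS n l i j) := by
  ext p q
  rw [mul_PhiS_apply, PhiS_mul_apply]
  simp only [Uext, updateKey, Prod.ext_iff, eq_comm (a := q.2.2.1), Function.update_eq_iff,
    ite_and, Finset.sum_ite_eq', Finset.mem_univ, if_true]
  simp only [eq_comm (a := q.2.2.1 _)]

end PhiS

section Bounds

variable (i : Fin l) (j : Bool)

lemma two_rpow_neg_half_sq : ((2 : ℝ) ^ (-(n : ℝ) / 2)) ^ 2 = ((2 : ℝ) ^ n)⁻¹ := by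
  rw [← Real.rpow_natCast, ← Real.rpow_mul zero_le_two, Nat.cast_two,
    div_mul_cancel₀ _ two_ne_zero, Real.rpow_neg zero_le_two, Real.rpow_natCast]

lemma norm_Peq_mul_PhiS_le : ‖Peq n l i j * PhiS n l i j‖ ≤ 2 ^ (-(n : ℝ) / 2) := by
  have h := (isStarProjection_Peq i j).norm_mul_sq (PhiS n l i j)
  rw [(isStarProjection_PhiS i j).isSelfAdjoint.star_eq, PhiS_mul_Peq_mul_PhiS, norm_smul] at h
  refine (pow_le_pow_iff_left₀ (norm_nonneg _) (by positivity) two_ne_zero).mp ?_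
  rw [h, two_rpow_neg_half_sq]
  simpa using mul_le_of_le_one_right (norm_nonneg ((2 : ℂ) ^ n)⁻¹)
    ((isStarProjection_PhiS i j).norm_le)

lemma norm_commutator_Peq_PhiS_le :
    ‖Peq n l i j * PhiS n l i j - PhiS n l i j * Peq n l i j‖ ≤ 2 ^ (-(n : ℝ) / 2) :=
  (norm_commutator_le_norm_mul_of_isStarProjection (isStarProjection_Peq i j)
    (isStarProjection_PhiS i j).isSelfAdjoint).trans (norm_Peq_mul_PhiS_le i j)

lemma norm_commutator_Uij_PhiS_le :
    ‖Uij n l i j * PhiS n l i j - PhiS n l i j * Uij n l i j‖ ≤ 2 * 2 ^ (-(n : ℝ) / 2) := by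
  have hC : ‖Cnot n l i j‖ ≤ 1 := by
    rw [Cnot_eq_permMatrix]; exact permMatrix_l2_opNorm_le _
  rw [Uij]
  exact (norm_commutator_mul_sub_one_add_one_le (commute_Cnot_PhiS i j i j) hC).trans
    (by gcongr; exact norm_commutator_Peq_PhiS_le i j)

lemma norm_commutator_Pneq_PhiS_le :
    ‖Pneq n l * PhiS n l i j - PhiS n l i j * Pneq n l‖ ≤ 2 ^ (-(n : ℝ) / 2) := by
  have hsplit : Pneq n l * PhiS n l i j - PhiS n l i j * Pneq n l =
      -(PneqExcept i j * (Peq n l i j * PhiS n l i j - PhiS n l i j * Peq n l i j)) := by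
    rw [Pneq_eq_PneqExcept_mul i j, mul_assoc, ← mul_assoc (PhiS n l i j),
      ← (commute_PneqExcept_PhiS i j).eq]
    noncomm_ring
  rw [hsplit, norm_neg]
  calc _ ≤ ‖PneqExcept (n := n) i j‖ *
          ‖Peq n l i j * PhiS n l i j - PhiS n l i j * Peq n l i j‖ := norm_mul_le _ _
    _ ≤ 1 * 2 ^ (-(n : ℝ) / 2) := by
        gcongr
        exacts [(isStarProjection_PneqExcept i j).norm_le, norm_commutator_Peq_PhiS_le i j]
    _ = _ := one_mul _

lemma norm_commutator_Uneq_PhiS_le {U0 : Matrix (Bn n × Bn n) (Bn n × Bn n) ℂ}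
    (hU0 : U0ᴴ * U0 = 1) :
    ‖Uneq n l U0 * PhiS n l i j - PhiS n l i j * Uneq n l U0‖ ≤ 2 * 2 ^ (-(n : ℝ) / 2) := by
  rw [Uneq]
  exact (norm_commutator_mul_sub_one_add_one_le (commute_Uext_PhiS i j U0)
    (CStarRing.norm_of_mem_unitary (Uext_mem_unitary hU0)).le).trans
    (by gcongr; exact norm_commutator_Pneq_PhiS_le i j)

lemma norm_commutator_Uprod_PhiS_le :
    ‖Uprod n l * PhiS n l i j - PhiS n l i j * Uprod n l‖ ≤ 2 * 2 ^ (-(n : ℝ) / 2) := by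
  have hU : ∀ a b, ‖Uij n l a b‖ ≤ 1 := fun a b =>
    (CStarRing.norm_of_mem_unitary (Uij_mem_unitary a b)).le
  refine (norm_commutator_list_prod_le _ _ ?_).trans ?_
  · simp only [List.mem_ofFn]
    rintro _ ⟨a, rfl⟩
    exact (norm_mul_le _ _).trans (mul_le_one₀ (hU a false) (norm_nonneg _) (hU a true))
  rw [List.map_ofFn, List.sum_ofFn]
  calc _ ≤ ∑ k : Fin l × Bool,
          ‖Uij n l k.1 k.2 * PhiS n l i j - PhiS n l i j * Uij n l k.1 k.2‖ := by
        rw [Fintype.sum_prod_type]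
        gcongr with a
        simpa [Fintype.sum_bool, add_comm] using
          norm_commutator_mul_le_of_norm_le_one (hU a false) (hU a true) (PhiS n l i j)
    _ = ‖Uij n l i j * PhiS n l i j - PhiS n l i j * Uij n l i j‖ :=
        Fintype.sum_eq_single (i, j) fun k hk => by
          rw [(commute_Uij_PhiS i j hk).eq, sub_self, norm_zero]
    _ ≤ 2 * 2 ^ (-(n : ℝ) / 2) := norm_commutator_Uij_PhiS_le i j

end Bounds

/-- For the Lamport superposition-oracle hash unitary `U_h` (the case `w = 2`), the
commutator with the uniform-superposition projector on any secret-key register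
satisfies `‖[U_h, Φ_{S_i^j}]‖ ≤ 6·2^{−n/2}`. -/
theorem stmt_10 (n l : ℕ)
    (U0 : Matrix (Bn n × Bn n) (Bn n × Bn n) ℂ) (hU0 : U0ᴴ * U0 = 1)
    (i : Fin l) (j : Bool) :
    ‖Matrix.toEuclideanCLM (𝕜 := ℂ)
        (Uh n l U0 * PhiS n l i j - PhiS n l i j * Uh n l U0)‖ ≤
      6 * (2 : ℝ) ^ (-(n : ℝ) / 2) := by
  rw [← cstar_norm_def, Uh_eq_Uprod_mul]
  calc _ ≤ ‖Uprod n l‖ * ‖Uneq n l U0 * PhiS n l i j - PhiS n l i j * Uneq n l U0‖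
        + ‖Uprod n l * PhiS n l i j - PhiS n l i j * Uprod n l‖ * ‖Uneq n l U0‖ :=
        norm_commutator_mul_le _ _ _
    _ ≤ 1 * (2 * 2 ^ (-(n : ℝ) / 2)) + 2 * 2 ^ (-(n : ℝ) / 2) * 2 := by
        gcongr
        exacts [(CStarRing.norm_of_mem_unitary Uprod_mem_unitary).le,
          norm_commutator_Uneq_PhiS_le i j hU0, norm_commutator_Uprod_PhiS_le i j,
          norm_Uneq_le hU0]
    _ = 6 * 2 ^ (-(n : ℝ) / 2) := by ring

end Stmt10
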